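/- Assume Γ is unitrivalent. For every positive integer k and every choice of boundary values j', there exists an external edge cocycle, i.e. a twisted 1-cocycle δ : Z(Γ) → (QCG_k(Γ; j') → ℂˣ) such that δ_j(λ) = exp(π√−1 · Σ_{f ∈ Ex(λ)} j f) for every λ ∈ Z(Γ) and j ∈ QCG_k(Γ; j') with λ·j = j. -/

import Mathlib

/-!
Let `χ_j(λ)` be the parity of `Σ_{f ∈ Ex(λ)} j f`. If the cycle `λ` fixes an admissible `j`,
every edge of `λ` has weight `k/4`, every vertex on `λ` is trivalent with exactly two of its
ends on `λ`, and the third end carries the integral weight `θ(v) = Σ_{ends at v} j - k/2`.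
Double counting over the vertices of `λ` gives `Σ_{Ex(λ)} j ≡ Σ_{v on λ} θ(v) (mod 2)`; in
particular the sum is an integer. Comparing `λ`, `λ'` and `λ + λ'` vertex by vertex, the
discrepancy is, modulo 2, carried by the vertices where `λ` and `λ'` share exactly one end; there
`θ(v) = k/4`, and there is an even number of such vertices, so `χ_j` is additive on the
stabilizer of `j`. As a cycle crosses the boundary of any vertex set an even number of times,
`χ` is also constant along orbits. Extending `χ` from the stabilizer of an orbit representative
to a `ZMod 2`-linear form `ψ` on `E → ZMod 2` gives the cocycle `δ_j(λ) = (-1)^{ψ(λ)}`.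
-/

open scoped BigOperators

set_option linter.unusedSectionVars false
set_option linter.unreachableTactic false
set_option linter.unusedTactic false

variable {V E : Type*} [Fintype V] [Fintype E] [DecidableEq V] [DecidableEq E]

/-- The multiset of edge-ends at a vertex `v`: each edge `e` contributes one end for
`s e = v` and one end for `t e = v`, so a loop at `v` contributes twice. -/
def endsAt (s t : E → V) (v : V) : Multiset E :=
  (Finset.univ.filter fun e => s e = v).val + (Finset.univ.filter fun e => t e = v).val

/-- The degree of a vertex (a loop counts twice). -/
def degree (s t : E → V) (v : V) : ℕ := Multiset.card (endsAt s t v)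

/-- A graph is unitrivalent if every vertex has degree `1` or `3`. -/
def Unitrivalent (s t : E → V) : Prop := ∀ v, degree s t v = 1 ∨ degree s t v = 3

/-- The cycle space `Z(Γ)`: the `ZMod 2`-valued functions on edges whose total value over
the edge-ends at every vertex is `0`.  It plays the role of `H₁(Γ; ℤ/2)`. -/
def cycleSpace (s t : E → V) : AddSubgroup (E → ZMod 2) where
  carrier := {x | ∀ v, ((endsAt s t v).map x).sum = 0}
  zero_mem' := by intro v; simp
  add_mem' := by
    intro a b ha hb v
    have h : ((endsAt s t v).map (a + b)).sum
        = ((endsAt s t v).map a).sum + ((endsAt s t v).map b).sum := by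
      rw [show ((a + b : E → ZMod 2)) = fun e => a e + b e from rfl]
      rw [Multiset.sum_map_add]
    rw [h, ha v, hb v, add_zero]
  neg_mem' := by
    intro a ha v
    have h : (-a : E → ZMod 2) = a := funext fun e => by
      have h2 : ∀ x : ZMod 2, -x = x := by decide
      exact h2 (a e)
    rw [h]; exact ha v

/-- A weight of level `k`: each edge gets a value in `{0, 1/2, 1, …, k/2}`. -/
def IsWeight (k : ℕ) (j : E → ℚ) : Prop := ∀ f, ∃ m : ℕ, m ≤ k ∧ j f = (m : ℚ) / 2

/-- The set `QCG_k(Γ; j')` of admissible weights of level `k` with boundary values `j'`: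
weights agreeing with `j'` on edges with a univalent endpoint and satisfying the quantum
Clebsch–Gordan condition at every trivalent vertex (a loop contributes its weight twice;
the condition `2x ≤ a+b+c` for each of the three end-weights `x` is the triangle
inequality). -/
def QCG (s t : E → V) (k : ℕ) (j' : E → ℚ) : Set (E → ℚ) :=
  {j | IsWeight k j ∧
    (∀ f, (degree s t (s f) = 1 ∨ degree s t (t f) = 1) → j f = j' f) ∧
    (∀ v, degree s t v = 3 →
      (∃ m : ℤ, ((endsAt s t v).map j).sum = (m : ℚ)) ∧
      (∀ x ∈ (endsAt s t v).map j, 2 * x ≤ ((endsAt s t v).map j).sum) ∧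
      ((endsAt s t v).map j).sum ≤ (k : ℚ))}

/-- The action of a cycle `lam` on a weight `j`:
`(lam · j) f = k/2 - j f` if `lam f = 1` and `(lam · j) f = j f` otherwise. -/
def actW (k : ℕ) (lam : E → ZMod 2) (j : E → ℚ) : E → ℚ :=
  fun f => if lam f = 1 then (k : ℚ) / 2 - j f else j f

theorem actW_zero (k : ℕ) (j : E → ℚ) : actW k (0 : E → ZMod 2) j = j := by
  funext f
  simp [actW]

theorem actW_add (k : ℕ) (l l' : E → ZMod 2) (j : E → ℚ) :
    actW k (l + l') j = actW k l (actW k l' j) := by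
  funext f
  have h : ∀ x : ZMod 2, x = 0 ∨ x = 1 := by decide
  simp only [actW, Pi.add_apply]
  rcases h (l f) with h1 | h1 <;> rcases h (l' f) with h2 | h2 <;>
    simp [h1, h2] <;> ring

theorem add_self_zmod2 (l : E → ZMod 2) : l + l = 0 := by
  funext f
  have h : ∀ x : ZMod 2, x + x = 0 := by decide
  exact h (l f)

/-- A vertex `v` lies on the cycle `lam` if some edge of `lam` has `v` as an endpoint. -/
def LiesOn (s t : E → V) (lam : E → ZMod 2) (v : V) : Prop :=
  ∃ e, lam e = 1 ∧ (s e = v ∨ t e = v)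

/-- An edge `f` is `lam`-external if `lam` does not pass through `f` and exactly one of
its endpoints lies on `lam`. -/
def IsExternal (s t : E → V) (lam : E → ZMod 2) (f : E) : Prop :=
  lam f = 0 ∧ Xor' (LiesOn s t lam (s f)) (LiesOn s t lam (t f))

/-- `Ex(lam)`: the finite set of `lam`-external edges. -/
noncomputable def Ex (s t : E → V) (lam : E → ZMod 2) : Finset E :=
  letI := Classical.decPred (IsExternal s t lam)
  Finset.univ.filter (IsExternal s t lam)

/-- A twisted 1-cocycle `δ : Z(Γ) → (QCG_k(Γ; j') → ℂˣ)` (encoded as a function on all of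
`(E → ZMod 2) × (E → ℚ)`, constrained only on `Z(Γ) × QCG_k(Γ; j')`). -/
def IsCocycle (s t : E → V) (k : ℕ) (j' : E → ℚ)
    (δ : (E → ZMod 2) → (E → ℚ) → ℂˣ) : Prop :=
  ∀ lam ∈ cycleSpace s t, ∀ lam' ∈ cycleSpace s t, ∀ j ∈ QCG s t k j',
    δ (lam + lam') j = δ lam (actW k lam' j) * δ lam' j

/-- A coboundary. -/
def IsCoboundary (s t : E → V) (k : ℕ) (j' : E → ℚ)
    (δ : (E → ZMod 2) → (E → ℚ) → ℂˣ) : Prop :=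
  ∃ c : (E → ℚ) → ℂˣ, ∀ lam ∈ cycleSpace s t, ∀ j ∈ QCG s t k j',
    δ lam j = c (actW k lam j) * (c j)⁻¹

/-- The external edge condition. -/
def ExtCond (s t : E → V) (k : ℕ) (j' : E → ℚ)
    (δ : (E → ZMod 2) → (E → ℚ) → ℂˣ) : Prop :=
  ∀ lam ∈ cycleSpace s t, ∀ j ∈ QCG s t k j', actW k lam j = j →
    (δ lam j : ℂ) =
      Complex.exp (Real.pi * Complex.I * ((∑ f ∈ Ex s t lam, j f : ℚ) : ℂ))

open Finset

theorem zmod_two_eq_one_of_ne_zero {x : ZMod 2} (h : x ≠ 0) : x = 1 := by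
  revert x; decide

theorem zmod_two_mul_eq_one_iff {x y : ZMod 2} : x * y = 1 ↔ x = 1 ∧ y = 1 := by
  revert x y; decide

theorem AddCommGroup.ModEq.sum {ι M : Type*} [AddCommGroup M] {p : M} {s : Finset ι}
    {f g : ι → M} (h : ∀ i ∈ s, f i ≡ g i [PMOD p]) :
    ∑ i ∈ s, f i ≡ ∑ i ∈ s, g i [PMOD p] := by
  classical
  induction s using Finset.induction_on with
  | empty => exact AddCommGroup.modEq_refl _
  | insert a s ha ih =>
    rw [Finset.sum_insert ha, Finset.sum_insert ha]
    exact (h a (mem_insert_self a s)).add (ih fun i hi => h i (mem_insert_of_mem hi))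

theorem two_mul_modEq_zero {x : ℚ} (hx : ∃ n : ℤ, x = n) : 2 * x ≡ 0 [PMOD 2] := by
  obtain ⟨n, rfl⟩ := hx
  exact AddCommGroup.modEq_iff_zsmul'.mpr ⟨-n, by rw [zsmul_eq_mul]; push_cast; ring⟩

theorem exists_int_sum {ι : Type*} {s : Finset ι} {f : ι → ℚ} (h : ∀ i ∈ s, ∃ n : ℤ, f i = n) :
    ∃ n : ℤ, ∑ i ∈ s, f i = n :=
  Finset.sum_induction f (fun x => ∃ n : ℤ, x = n)
    (fun _ _ ⟨a, ha⟩ ⟨b, hb⟩ => ⟨a + b, by rw [ha, hb]; push_cast; rfl⟩) ⟨0, by simp⟩ h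

theorem intCast_floor_eq_of_modEq {x : ℚ} {n : ℤ} (h : x ≡ n [PMOD 2]) :
    ((⌊x⌋ : ℤ) : ZMod 2) = n := by
  obtain ⟨z, hz⟩ := AddCommGroup.modEq_iff_zsmul'.mp h
  have hx : x = ((n - 2 * z : ℤ) : ℚ) := by rw [zsmul_eq_mul] at hz; push_cast; linarith
  rw [hx, Int.floor_intCast]
  push_cast
  rw [show (2 : ZMod 2) = 0 from rfl, zero_mul, sub_zero]

theorem sum_map_ite_eq_countP_mul {α R : Type*} [NonAssocSemiring R] (M : Multiset α)
    (p : α → Prop) [DecidablePred p] (r : R) :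
    (M.map fun a => if p a then r else 0).sum = M.countP p * r := by
  induction M using Multiset.induction_on with
  | empty => simp
  | cons a M ih => by_cases h : p a <;> simp [h, ih, add_mul, add_comm]

section OrbitCocycle

variable {G X : Type*} [AddCommGroup G] [Module (ZMod 2) G]

theorem exists_linearMap_eq_on_stabilizer (act : G → X → X) (act_zero : ∀ x, act 0 x = x)
    (act_add : ∀ g h x, act (g + h) x = act g (act h x)) (H : AddSubgroup G)
    (χ : G → X → ZMod 2) (x : X)
    (hχ_add : ∀ g ∈ H, ∀ h ∈ H, act g x = x → act h x = x → χ (g + h) x = χ g x + χ h x) :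
    ∃ φ : G →ₗ[ZMod 2] ZMod 2, ∀ g ∈ H, act g x = x → φ g = χ g x := by
  let stab : AddSubgroup G :=
    { carrier := {g | g ∈ H ∧ act g x = x}
      add_mem' := fun ⟨ha, ha'⟩ ⟨hb, hb'⟩ => ⟨H.add_mem ha hb, by rw [act_add, hb', ha']⟩
      zero_mem' := ⟨H.zero_mem, act_zero x⟩
      neg_mem' := fun {g} ⟨hg, hg'⟩ =>
        ⟨H.neg_mem hg, by conv_lhs => rw [← hg', ← act_add, neg_add_cancel, act_zero]⟩ }
  let f : AddSubgroup.toZModSubmodule 2 stab →+ ZMod 2 :=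
    AddMonoidHom.mk' (fun g => χ g x) fun a b => hχ_add a a.2.1 b b.2.1 a.2.2 b.2.2
  obtain ⟨φ, hφ⟩ := LinearMap.exists_extend (f.toZModLinearMap 2)
  exact ⟨φ, fun g hg hgx => LinearMap.congr_fun hφ ⟨g, hg, hgx⟩⟩

/-- Choose a representative of each orbit meeting `S` and extend its character from the
stabilizer to a linear form on all of `G`. -/
theorem exists_cocycle_of_additive_on_stabilizers (act : G → X → X)
    (act_zero : ∀ x, act 0 x = x) (act_add : ∀ g h x, act (g + h) x = act g (act h x))
    (H : AddSubgroup G) (S : Set X) (χ : G → X → ZMod 2)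
    (hχ_add : ∀ x ∈ S, ∀ g ∈ H, ∀ h ∈ H, act g x = x → act h x = x →
      χ (g + h) x = χ g x + χ h x)
    (hχ_act : ∀ x ∈ S, ∀ g ∈ H, ∀ h ∈ H, act g x = x → χ g (act h x) = χ g x) :
    ∃ δ : G → X → ZMod 2,
      (∀ g ∈ H, ∀ h ∈ H, ∀ x, δ (g + h) x = δ g (act h x) + δ h x) ∧
      ∀ g ∈ H, ∀ x ∈ S, act g x = x → δ g x = χ g x := by
  have act_neg_act : ∀ h x, act (-h) (act h x) = x := fun h x => by
    rw [← act_add, neg_add_cancel, act_zero]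
  have hφ : ∀ x, ∃ φ : G →ₗ[ZMod 2] ZMod 2, x ∈ S → ∀ g ∈ H, act g x = x → φ g = χ g x := by
    intro x
    by_cases hx : x ∈ S
    · obtain ⟨φ, hφ⟩ := exists_linearMap_eq_on_stabilizer act act_zero act_add H χ x (hχ_add x hx)
      exact ⟨φ, fun _ => hφ⟩
    · exact ⟨0, fun h => absurd h hx⟩
  choose φ hφ using hφ
  let rep : X → X := fun x =>
    @Classical.epsilon X ⟨x⟩ fun y => y ∈ S ∧ ∃ h ∈ H, act h y = x
  have rep_act : ∀ x, ∀ h ∈ H, rep (act h x) = rep x := by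
    intro x h hh
    simp only [rep]
    congr 1
    refine funext fun y => propext (and_congr_right fun _ => ?_)
    constructor
    · rintro ⟨g, hg, hgy⟩
      exact ⟨-h + g, H.add_mem (H.neg_mem hh) hg, by rw [act_add, hgy, act_neg_act]⟩
    · rintro ⟨g, hg, rfl⟩
      exact ⟨h + g, H.add_mem hh hg, act_add h g y⟩
  refine ⟨fun g x => φ (rep x) g, fun g _ h hh x => ?_, fun g hg x hx hgx => ?_⟩
  · simp only [rep_act x h hh, map_add]
  · obtain ⟨hr, h, hh, hrx⟩ : rep x ∈ S ∧ ∃ h ∈ H, act h (rep x) = x :=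
      @Classical.epsilon_spec X (fun y => y ∈ S ∧ ∃ h ∈ H, act h y = x)
        ⟨x, hx, 0, H.zero_mem, act_zero x⟩
    have hgr : act g (rep x) = rep x := by
      rw [← act_neg_act h (rep x), hrx, ← act_add, add_comm, act_add, hgx]
    show φ (rep x) g = χ g x
    rw [hφ _ hr g hg hgr, ← hχ_act _ hr g hg h hh hgr, hrx]

end OrbitCocycle

section Graph

variable {s t : E → V} {ν : E → ZMod 2} {v : V}

theorem mem_endsAt {e : E} : e ∈ endsAt s t v ↔ s e = v ∨ t e = v := by
  simp [endsAt]

theorem mem_Ex {f : E} : f ∈ Ex s t ν ↔ IsExternal s t ν f := by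
  unfold Ex
  simp

theorem sum_mul_sum_endsAt {R : Type*} [CommSemiring R] (s t : E → V) (w : V → R) (F : E → R) :
    ∑ v, w v * ((endsAt s t v).map F).sum = ∑ f, (w (s f) + w (t f)) * F f := by
  have h : ∀ v, ((endsAt s t v).map F).sum =
      ∑ e, ((if s e = v then F e else 0) + if t e = v then F e else 0) := fun v => by
    rw [Finset.sum_add_distrib, ← Finset.sum_filter, ← Finset.sum_filter]
    simp [endsAt, Finset.sum]
  simp only [h, Finset.mul_sum, mul_add, mul_ite, mul_zero, Finset.sum_add_distrib]
  rw [Finset.sum_comm, Finset.sum_comm (f := fun v e => if t e = v then w v * F e else 0),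
    ← Finset.sum_add_distrib]
  simp [add_mul]

theorem liesOn_of_eq_one {f : E} (hf : ν f = 1) :
    LiesOn s t ν (s f) ∧ LiesOn s t ν (t f) :=
  ⟨⟨f, hf, .inl rfl⟩, ⟨f, hf, .inr rfl⟩⟩

theorem isExternal_iff {f : E} :
    IsExternal s t ν f ↔ Xor (LiesOn s t ν (s f)) (LiesOn s t ν (t f)) := by
  refine ⟨And.right, fun h => ⟨?_, h⟩⟩
  by_contra hf
  obtain ⟨hs, ht⟩ := liesOn_of_eq_one (s := s) (t := t) (zmod_two_eq_one_of_ne_zero hf)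
  exact h.elim (fun h' => h'.2 ht) (fun h' => h'.2 hs)

open Classical in
theorem sum_liesOn_mul_sum_endsAt {R : Type*} [CommRing R] (s t : E → V) (ν : E → ZMod 2)
    (F : E → R) :
    ∑ v, (if LiesOn s t ν v then 1 else 0) * ((endsAt s t v).map F).sum =
      ∑ f ∈ Ex s t ν, F f +
        2 * ∑ f, if LiesOn s t ν (s f) ∧ LiesOn s t ν (t f) then F f else 0 := by
  rw [sum_mul_sum_endsAt, Ex, Finset.sum_filter, Finset.mul_sum, ← Finset.sum_add_distrib]
  refine Finset.sum_congr rfl fun f _ => ?_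
  simp only [isExternal_iff]
  by_cases hs : LiesOn s t ν (s f) <;> by_cases ht : LiesOn s t ν (t f) <;> simp [hs, ht]; ring

theorem even_card_filter_Ex {μ : E → ZMod 2} (hμ : μ ∈ cycleSpace s t) :
    Even #{f ∈ Ex s t ν | μ f = 1} := by
  have h := sum_liesOn_mul_sum_endsAt s t ν μ
  simp only [show ∀ v, ((endsAt s t v).map μ).sum = 0 from hμ, mul_zero, Finset.sum_const_zero,
    show (2 : ZMod 2) = 0 from rfl, zero_mul, add_zero] at h
  rw [← ZMod.natCast_eq_zero_iff_even, ← Finset.sum_boole]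
  refine (Finset.sum_congr rfl fun f _ => ?_).trans h.symm
  split_ifs with h1
  · exact h1.symm
  · exact (not_not.mp (mt zmod_two_eq_one_of_ne_zero h1)).symm

theorem exists_endsAt_eq_of_liesOn (hut : Unitrivalent s t) (hν : ν ∈ cycleSpace s t)
    (hv : LiesOn s t ν v) :
    ∃ f e₁ e₂, endsAt s t v = {f, e₁, e₂} ∧ ν f = 0 ∧ ν e₁ = 1 ∧ ν e₂ = 1 := by
  obtain ⟨e, he, hev⟩ := hv
  have hmem : e ∈ endsAt s t v := mem_endsAt.mpr hev
  have hsum : ((endsAt s t v).map ν).sum = 0 := hν v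
  rcases hut v with h1 | h3
  · obtain ⟨x, hx⟩ := Multiset.card_eq_one.mp h1
    rw [hx, Multiset.mem_singleton] at hmem
    simp [hx, ← hmem, he] at hsum
  · obtain ⟨x, y, z, hxyz⟩ := Multiset.card_eq_three.mp h3
    have hone : ν x = 1 ∨ ν y = 1 ∨ ν z = 1 := by
      rw [hxyz] at hmem
      simp only [Multiset.insert_eq_cons, Multiset.mem_cons, Multiset.mem_singleton] at hmem
      rcases hmem with rfl | rfl | rfl <;> simp [he]
    have hsum3 : ν x + ν y + ν z = 0 := by simpa [hxyz, add_assoc] using hsum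
    have key : ∀ a b c : ZMod 2, a + b + c = 0 → (a = 1 ∨ b = 1 ∨ c = 1) →
        (a = 0 ∧ b = 1 ∧ c = 1) ∨ (b = 0 ∧ a = 1 ∧ c = 1) ∨ (c = 0 ∧ a = 1 ∧ b = 1) := by
      decide
    rcases key _ _ _ hsum3 hone with h | h | h
    · exact ⟨x, y, z, hxyz, h⟩
    · exact ⟨y, x, z, by rw [hxyz]; exact Multiset.cons_swap _ _ _, h⟩
    · refine ⟨z, x, y, ?_, h⟩
      rw [hxyz]
      simp only [Multiset.insert_eq_cons, ← Multiset.singleton_add]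
      abel

def supportDegree (s t : E → V) (ν : E → ZMod 2) (v : V) : ℕ :=
  (endsAt s t v).countP fun e => ν e = 1

theorem supportDegree_of_liesOn (hut : Unitrivalent s t) (hν : ν ∈ cycleSpace s t)
    (hv : LiesOn s t ν v) : supportDegree s t ν v = 2 := by
  obtain ⟨f, e₁, e₂, hends, hf, h₁, h₂⟩ := exists_endsAt_eq_of_liesOn hut hν hv
  simp [supportDegree, hends, hf, h₁, h₂, Multiset.countP_eq_card_filter, Multiset.filter_singleton]

theorem supportDegree_of_not_liesOn (hv : ¬LiesOn s t ν v) : supportDegree s t ν v = 0 :=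
  Multiset.countP_eq_zero.mpr fun e he h1 => hv ⟨e, h1, mem_endsAt.mp he⟩

theorem supportDegree_add_add_two_mul (s t : E → V) (ν ν' : E → ZMod 2) (v : V) :
    supportDegree s t (ν + ν') v + 2 * supportDegree s t (ν * ν') v =
      supportDegree s t ν v + supportDegree s t ν' v := by
  unfold supportDegree
  induction endsAt s t v using Multiset.induction_on with
  | empty => simp
  | cons a M ih =>
    have key : ∀ x y : ZMod 2, ((if x + y = 1 then 1 else 0) + 2 * if x * y = 1 then 1 else 0) =
        (if x = 1 then 1 else 0) + (if y = 1 then 1 else 0) := by decide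
    have := key (ν a) (ν' a)
    simp only [Multiset.countP_cons, Pi.add_apply, Pi.mul_apply] at ih ⊢
    omega

theorem supportDegree_le_two (hut : Unitrivalent s t) (hν : ν ∈ cycleSpace s t) :
    supportDegree s t ν v ≤ 2 := by
  by_cases hv : LiesOn s t ν v
  · exact (supportDegree_of_liesOn hut hν hv).le
  · simp [supportDegree_of_not_liesOn hv]

theorem liesOn_of_supportDegree_ne_zero (h : supportDegree s t ν v ≠ 0) : LiesOn s t ν v := by
  obtain ⟨e, he, he1⟩ := Multiset.countP_pos.mp (Nat.pos_of_ne_zero h)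
  exact ⟨e, he1, mem_endsAt.mp he⟩

theorem LiesOn.of_mul {ν' : E → ZMod 2} (h : LiesOn s t (ν * ν') v) :
    LiesOn s t ν v ∧ LiesOn s t ν' v := by
  obtain ⟨e, he, hev⟩ := h
  exact ⟨⟨e, (zmod_two_mul_eq_one_iff.mp he).1, hev⟩, ⟨e, (zmod_two_mul_eq_one_iff.mp he).2, hev⟩⟩

theorem sum_supportDegree (s t : E → V) (ν : E → ZMod 2) :
    ∑ v, supportDegree s t ν v = 2 * #{f | ν f = 1} := by
  have h := sum_mul_sum_endsAt s t (fun _ => 1) fun f => if ν f = 1 then 1 else 0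
  simp only [one_mul, sum_map_ite_eq_countP_mul, Nat.cast_id, mul_one] at h
  rw [Finset.card_filter, Finset.mul_sum]
  exact h

theorem exists_liesOn_of_mem_Ex {f : E} (hf : f ∈ Ex s t ν) :
    ∃ v, LiesOn s t ν v ∧ f ∈ endsAt s t v := by
  rcases (mem_Ex.mp hf).2 with ⟨h, -⟩ | ⟨h, -⟩
  · exact ⟨s f, h, mem_endsAt.mpr (.inl rfl)⟩
  · exact ⟨t f, h, mem_endsAt.mpr (.inr rfl)⟩

end Graph

section Weights

variable {s t : E → V} {k : ℕ} {j j' : E → ℚ} {ν ν' : E → ZMod 2} {v : V}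

/-- At a vertex of a cycle fixing `j` this is the weight of the edge-end off the cycle
(`weight_eq_thirdWeight`). -/
noncomputable def thirdWeight (s t : E → V) (k : ℕ) (j : E → ℚ) (v : V) : ℚ :=
  ((endsAt s t v).map j).sum - k / 2

theorem weight_eq_of_actW_eq (hfix : actW k ν j = j) {e : E} (he : ν e = 1) :
    j e = k / 4 := by
  have h := congrFun hfix e
  simp only [actW, if_pos he] at h
  linarith

theorem half_level_int (hw : IsWeight k j) (hfix : actW k ν j = j) {e : E} (he : ν e = 1) :
    ∃ n : ℤ, (k : ℚ) / 2 = n := by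
  obtain ⟨m, -, hm⟩ := hw e
  have := weight_eq_of_actW_eq hfix he
  exact ⟨m, by push_cast; linarith⟩

theorem sum_endsAt_ite_eq_thirdWeight (hut : Unitrivalent s t) (hν : ν ∈ cycleSpace s t)
    (hfix : actW k ν j = j) (hv : LiesOn s t ν v) :
    ((endsAt s t v).map fun e => if ν e = 1 then 0 else j e).sum = thirdWeight s t k j v := by
  obtain ⟨f, e₁, e₂, hends, hf, h₁, h₂⟩ := exists_endsAt_eq_of_liesOn hut hν hv
  simp [thirdWeight, hends, hf, h₁, h₂, weight_eq_of_actW_eq hfix h₁,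
    weight_eq_of_actW_eq hfix h₂]
  ring

theorem weight_eq_thirdWeight (hut : Unitrivalent s t) (hν : ν ∈ cycleSpace s t)
    (hfix : actW k ν j = j) (hv : LiesOn s t ν v) {e : E} (he : e ∈ endsAt s t v)
    (hνe : ν e ≠ 1) : j e = thirdWeight s t k j v := by
  rw [← sum_endsAt_ite_eq_thirdWeight hut hν hfix hv]
  obtain ⟨f, e₁, e₂, hends, hf, h₁, h₂⟩ := exists_endsAt_eq_of_liesOn hut hν hv
  rw [hends] at he ⊢
  simp only [Multiset.insert_eq_cons, Multiset.mem_cons, Multiset.mem_singleton] at he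
  rcases he with rfl | rfl | rfl <;> simp_all

theorem thirdWeight_int (hut : Unitrivalent s t) (hν : ν ∈ cycleSpace s t)
    (hj : j ∈ QCG s t k j') (hfix : actW k ν j = j) (hv : LiesOn s t ν v) :
    ∃ n : ℤ, thirdWeight s t k j v = n := by
  obtain ⟨f, e₁, e₂, hends, -, h₁, -⟩ := exists_endsAt_eq_of_liesOn hut hν hv
  have hdeg : degree s t v = 3 := by simp [degree, hends]
  obtain ⟨m, hm⟩ := (hj.2.2 v hdeg).1
  obtain ⟨n, hn⟩ := half_level_int hj.1 hfix h₁
  exact ⟨m - n, by rw [thirdWeight, hm, hn]; push_cast; ring⟩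

theorem thirdWeight_eq_of_supportDegree_mul_eq_one (hut : Unitrivalent s t)
    (hν : ν ∈ cycleSpace s t) (hν' : ν' ∈ cycleSpace s t)
    (hfix : actW k ν j = j) (hfix' : actW k ν' j = j)
    (h1 : supportDegree s t (ν * ν') v = 1) : thirdWeight s t k j v = k / 4 := by
  obtain ⟨hv, hv'⟩ := (liesOn_of_supportDegree_ne_zero (h1 ▸ one_ne_zero)).of_mul
  have h2 := supportDegree_of_liesOn hut hν' hv'
  obtain ⟨f, e₁, e₂, hends, hf, h₁, h₂⟩ := exists_endsAt_eq_of_liesOn hut hν hv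
  have hν'f : ν' f = 1 := by
    simp [supportDegree, hends, Multiset.countP_eq_card_filter, Multiset.filter_cons,
      Multiset.filter_singleton, hf, h₁, h₂] at h1 h2
    by_contra h
    simp only [h, if_false, Multiset.card_zero, zero_add] at h2
    omega
  rw [← weight_eq_thirdWeight hut hν hfix hv (e := f) (by simp [hends]) (by simp [hf]),
    weight_eq_of_actW_eq hfix' hν'f]

end Weights

section ExternalSum

variable {s t : E → V} {k : ℕ} {j j' : E → ℚ} {ν ν' : E → ZMod 2}

theorem sum_Ex_modEq_sum_thirdWeight (hut : Unitrivalent s t) (hν : ν ∈ cycleSpace s t)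
    (hj : j ∈ QCG s t k j') (hfix : actW k ν j = j) :
    ∑ f ∈ Ex s t ν, j f ≡
      ∑ v, (supportDegree s t ν v / 2 : ℚ) * thirdWeight s t k j v [PMOD 2] := by
  classical
  set F : E → ℚ := fun e => if ν e = 1 then 0 else j e
  have h := sum_liesOn_mul_sum_endsAt s t ν F
  have hEx : ∑ f ∈ Ex s t ν, F f = ∑ f ∈ Ex s t ν, j f := Finset.sum_congr rfl fun f hf => by
    have : ν f = 0 := (mem_Ex.mp hf).1
    simp [F, this]
  have hvert : ∀ v, (if LiesOn s t ν v then 1 else 0) * ((endsAt s t v).map F).sum =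
      (supportDegree s t ν v / 2 : ℚ) * thirdWeight s t k j v := by
    intro v
    by_cases hv : LiesOn s t ν v
    · rw [if_pos hv, one_mul, sum_endsAt_ite_eq_thirdWeight hut hν hfix hv,
        supportDegree_of_liesOn hut hν hv]
      norm_num
    · rw [if_neg hv, zero_mul, supportDegree_of_not_liesOn hv]
      simp
  obtain ⟨n, hn⟩ : ∃ n : ℤ,
      ∑ f, (if LiesOn s t ν (s f) ∧ LiesOn s t ν (t f) then F f else 0) = n := by
    refine exists_int_sum fun f _ => ?_
    by_cases hf : LiesOn s t ν (s f) ∧ LiesOn s t ν (t f)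
    · by_cases hνf : ν f = 1
      · exact ⟨0, by simp [F, hf, hνf]⟩
      · obtain ⟨m, hm⟩ := thirdWeight_int hut hν hj hfix hf.1
        refine ⟨m, ?_⟩
        rw [if_pos hf, ← hm]
        simp only [F, if_neg hνf]
        exact weight_eq_thirdWeight hut hν hfix hf.1 (mem_endsAt.mpr (.inl rfl)) hνf
    · exact ⟨0, by simp [hf]⟩
  simp only [hvert, hEx, hn] at h
  rw [h]
  exact AddCommGroup.modEq_iff_zsmul'.mpr ⟨n, by rw [zsmul_eq_mul]; ring⟩

theorem sum_supportDegree_mul_mul_thirdWeight_modEq_zero (hut : Unitrivalent s t)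
    (hν : ν ∈ cycleSpace s t) (hν' : ν' ∈ cycleSpace s t) (hj : j ∈ QCG s t k j')
    (hfix : actW k ν j = j) (hfix' : actW k ν' j = j) :
    ∑ v, (supportDegree s t (ν * ν') v : ℚ) * thirdWeight s t k j v ≡ 0 [PMOD 2] := by
  have hcases : ∀ v, supportDegree s t (ν * ν') v = 0 ∨ supportDegree s t (ν * ν') v = 1 ∨
      supportDegree s t (ν * ν') v = 2 := fun v => by
    have := supportDegree_add_add_two_mul s t ν ν' v
    have := supportDegree_le_two (v := v) hut hν
    have := supportDegree_le_two (v := v) hut hν'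
    omega
  have hint : ∀ v, supportDegree s t (ν * ν') v ≠ 0 → ∃ n : ℤ, thirdWeight s t k j v = n :=
    fun v hv => thirdWeight_int hut hν hj hfix (liesOn_of_supportDegree_ne_zero hv).of_mul.1
  have hcross : ∀ v, supportDegree s t (ν * ν') v = 1 → thirdWeight s t k j v = k / 4 :=
    fun v => thirdWeight_eq_of_supportDegree_mul_eq_one hut hν hν' hfix hfix'
  by_cases hq : ∃ q : ℤ, (k : ℚ) / 4 = q
  · obtain ⟨q, hq⟩ := hq
    calc ∑ v, (supportDegree s t (ν * ν') v : ℚ) * thirdWeight s t k j v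
        ≡ ∑ v, (supportDegree s t (ν * ν') v : ℚ) * (k / 4) [PMOD 2] := by
          refine AddCommGroup.ModEq.sum fun v _ => ?_
          rcases hcases v with h | h | h
          · simp [h, AddCommGroup.modEq_refl]
          · simp [h, hcross v h, AddCommGroup.modEq_refl]
          · rw [h, Nat.cast_two]
            exact (two_mul_modEq_zero (hint v (by omega))).trans
              (two_mul_modEq_zero ⟨q, hq⟩).symm
      _ = 2 * (#{f | (ν * ν') f = 1} * q : ℤ) := by
          rw [← Finset.sum_mul, ← Nat.cast_sum, sum_supportDegree, hq]
          push_cast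
          ring
      _ ≡ 0 [PMOD 2] := two_mul_modEq_zero ⟨_, rfl⟩
  · calc ∑ v, (supportDegree s t (ν * ν') v : ℚ) * thirdWeight s t k j v
        ≡ ∑ _v : V, (0 : ℚ) [PMOD 2] := by
          refine AddCommGroup.ModEq.sum fun v _ => ?_
          rcases hcases v with h | h | h
          · simp [h, AddCommGroup.modEq_refl]
          · obtain ⟨n, hn⟩ := hint v (by omega)
            exact absurd ⟨n, (hcross v h).symm.trans hn⟩ hq
          · rw [h, Nat.cast_two]
            exact two_mul_modEq_zero (hint v (by omega))
      _ = 0 := Finset.sum_const_zero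

theorem sum_Ex_add_modEq (hut : Unitrivalent s t) (hν : ν ∈ cycleSpace s t)
    (hν' : ν' ∈ cycleSpace s t) (hj : j ∈ QCG s t k j') (hfix : actW k ν j = j)
    (hfix' : actW k ν' j = j) :
    ∑ f ∈ Ex s t (ν + ν'), j f ≡ ∑ f ∈ Ex s t ν, j f + ∑ f ∈ Ex s t ν', j f [PMOD 2] := by
  have hfix'' : actW k (ν + ν') j = j := by rw [actW_add, hfix', hfix]
  refine (sum_Ex_modEq_sum_thirdWeight hut (add_mem hν hν') hj hfix'').trans
    (AddCommGroup.ModEq.trans ?_ ((sum_Ex_modEq_sum_thirdWeight hut hν hj hfix).add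
      (sum_Ex_modEq_sum_thirdWeight hut hν' hj hfix')).symm)
  have hsplit : ∑ v, (supportDegree s t (ν + ν') v / 2 : ℚ) * thirdWeight s t k j v =
      ∑ v, (supportDegree s t ν v / 2 : ℚ) * thirdWeight s t k j v +
        ∑ v, (supportDegree s t ν' v / 2 : ℚ) * thirdWeight s t k j v -
        ∑ v, (supportDegree s t (ν * ν') v : ℚ) * thirdWeight s t k j v := by
    rw [← Finset.sum_add_distrib, ← Finset.sum_sub_distrib]
    refine Finset.sum_congr rfl fun v _ => ?_
    have h := congrArg (Nat.cast (R := ℚ)) (supportDegree_add_add_two_mul s t ν ν' v)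
    push_cast at h
    linear_combination thirdWeight s t k j v / 2 * h
  rw [hsplit]
  simpa using AddCommGroup.ModEq.sub_left _
    (sum_supportDegree_mul_mul_thirdWeight_modEq_zero hut hν hν' hj hfix hfix')

theorem sum_Ex_actW_modEq (hut : Unitrivalent s t) (hν : ν ∈ cycleSpace s t)
    (hj : j ∈ QCG s t k j') (hfix : actW k ν j = j) {μ : E → ZMod 2}
    (hμ : μ ∈ cycleSpace s t) :
    ∑ f ∈ Ex s t ν, actW k μ j f ≡ ∑ f ∈ Ex s t ν, j f [PMOD 2] := by
  have hsplit : ∑ f ∈ Ex s t ν, actW k μ j f =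
      ∑ f ∈ Ex s t ν, j f + ∑ f ∈ Ex s t ν with μ f = 1, ((k : ℚ) / 2 - 2 * j f) := by
    rw [Finset.sum_filter, ← Finset.sum_add_distrib]
    refine Finset.sum_congr rfl fun f _ => ?_
    simp only [actW]
    split_ifs <;> ring
  rw [hsplit, AddCommGroup.add_modEq_left]
  rcases Finset.eq_empty_or_nonempty {f ∈ Ex s t ν | μ f = 1} with h | ⟨f₀, hf₀⟩
  · rw [h, Finset.sum_empty]
    exact AddCommGroup.modEq_rfl
  obtain ⟨v₀, ⟨e, he, -⟩, -⟩ := exists_liesOn_of_mem_Ex (Finset.mem_filter.mp hf₀).1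
  obtain ⟨n, hn⟩ := half_level_int hj.1 hfix he
  obtain ⟨m, hm⟩ := even_card_filter_Ex (ν := ν) hμ
  calc ∑ f ∈ Ex s t ν with μ f = 1, ((k : ℚ) / 2 - 2 * j f)
      ≡ ∑ f ∈ Ex s t ν with μ f = 1, (n : ℚ) [PMOD 2] := by
        refine AddCommGroup.ModEq.sum fun f hf => ?_
        obtain ⟨v, hv, hfv⟩ := exists_liesOn_of_mem_Ex (Finset.mem_filter.mp hf).1
        have hνf : ν f ≠ 1 := by simp [(mem_Ex.mp (Finset.mem_filter.mp hf).1).1]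
        rw [hn, weight_eq_thirdWeight hut hν hfix hv hfv hνf]
        simpa using AddCommGroup.ModEq.sub_left (n : ℚ)
          (two_mul_modEq_zero (thirdWeight_int hut hν hj hfix hv))
    _ = 2 * (m * n : ℤ) := by rw [Finset.sum_const, hm]; push_cast; ring
    _ ≡ 0 [PMOD 2] := two_mul_modEq_zero ⟨_, rfl⟩

theorem sum_Ex_int (hut : Unitrivalent s t) (hν : ν ∈ cycleSpace s t)
    (hj : j ∈ QCG s t k j') (hfix : actW k ν j = j) :
    ∃ n : ℤ, ∑ f ∈ Ex s t ν, j f = n := by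
  obtain ⟨n, hn⟩ : ∃ n : ℤ,
      ∑ v, (supportDegree s t ν v / 2 : ℚ) * thirdWeight s t k j v = n := by
    refine exists_int_sum fun v _ => ?_
    by_cases hv : LiesOn s t ν v
    · obtain ⟨m, hm⟩ := thirdWeight_int hut hν hj hfix hv
      exact ⟨m, by rw [supportDegree_of_liesOn hut hν hv, hm]; norm_num⟩
    · exact ⟨0, by simp [supportDegree_of_not_liesOn hv]⟩
  obtain ⟨z, hz⟩ :=
    AddCommGroup.modEq_iff_zsmul'.mp (sum_Ex_modEq_sum_thirdWeight hut hν hj hfix)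
  exact ⟨n - 2 * z, by rw [hn, zsmul_eq_mul] at hz; push_cast; linarith⟩

/-- Meaningful when the sum is an integer, e.g. when `ν` fixes an admissible `j`
(`sum_Ex_int`). -/
noncomputable def extParity (s t : E → V) (ν : E → ZMod 2) (j : E → ℚ) : ZMod 2 :=
  ⌊∑ f ∈ Ex s t ν, j f⌋

theorem extParity_add (hut : Unitrivalent s t) (hν : ν ∈ cycleSpace s t)
    (hν' : ν' ∈ cycleSpace s t) (hj : j ∈ QCG s t k j') (hfix : actW k ν j = j)
    (hfix' : actW k ν' j = j) :
    extParity s t (ν + ν') j = extParity s t ν j + extParity s t ν' j := by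
  obtain ⟨a, ha⟩ := sum_Ex_int hut hν hj hfix
  obtain ⟨b, hb⟩ := sum_Ex_int hut hν' hj hfix'
  have h := sum_Ex_add_modEq hut hν hν' hj hfix hfix'
  rw [ha, hb, ← Int.cast_add] at h
  simp only [extParity, intCast_floor_eq_of_modEq h, ha, hb, Int.floor_intCast, Int.cast_add]

theorem extParity_actW (hut : Unitrivalent s t) (hν : ν ∈ cycleSpace s t)
    (hj : j ∈ QCG s t k j') (hfix : actW k ν j = j) {μ : E → ZMod 2}
    (hμ : μ ∈ cycleSpace s t) :
    extParity s t ν (actW k μ j) = extParity s t ν j := by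
  obtain ⟨a, ha⟩ := sum_Ex_int hut hν hj hfix
  have h := sum_Ex_actW_modEq hut hν hj hfix hμ
  rw [ha] at h
  simp only [extParity, intCast_floor_eq_of_modEq h, ha, Int.floor_intCast]

theorem toCircle_extParity (hut : Unitrivalent s t) (hν : ν ∈ cycleSpace s t)
    (hj : j ∈ QCG s t k j') (hfix : actW k ν j = j) :
    (ZMod.toCircle (extParity s t ν j) : ℂ) =
      Complex.exp (Real.pi * Complex.I * ((∑ f ∈ Ex s t ν, j f : ℚ) : ℂ)) := by
  obtain ⟨a, ha⟩ := sum_Ex_int hut hν hj hfix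
  rw [extParity, ha, Int.floor_intCast, ZMod.toCircle_intCast]
  push_cast
  ring_nf

end ExternalSum

/-- for every positive integer `k` and every choice of boundary values
`j'`, there exists an external edge cocycle, i.e. a twisted 1-cocycle
`δ : Z(Γ) → (QCG_k(Γ; j') → ℂˣ)` with
`δ_j(lam) = exp(π√-1 · Σ_{f ∈ Ex(lam)} j f)` whenever `lam · j = j`. -/
theorem exists_external_edge_cocycle
    (s t : E → V) (hut : Unitrivalent s t) :
    ∀ k : ℕ, 0 < k → ∀ j' : E → ℚ,
      ∃ δ : (E → ZMod 2) → (E → ℚ) → ℂˣ,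
        IsCocycle s t k j' δ ∧ ExtCond s t k j' δ := by
  intro k _ j'
  obtain ⟨δ, hδ, hδ_ext⟩ := exists_cocycle_of_additive_on_stabilizers (actW k) (actW_zero k)
    (actW_add k) (cycleSpace s t) (QCG s t k j') (extParity s t)
    (fun _ hj _ hν _ hν' hfix hfix' => extParity_add hut hν hν' hj hfix hfix')
    (fun _ hj _ hν _ hμ hfix => extParity_actW hut hν hj hfix hμ)
  refine ⟨fun ν j => Circle.toUnits (ZMod.toCircle (δ ν j)), fun ν hν ν' hν' j _ => ?_,
    fun ν hν j hj hfix => ?_⟩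
  · simp only [hδ ν hν ν' hν' j, AddChar.map_add_eq_mul, map_mul]
  · rw [← toCircle_extParity hut hν hj hfix, ← hδ_ext ν hν j hj hfix]
    rfl
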